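/- arXiv:1402.3856 — 8 statements merged into one kernel-verified Lean document; each statement's English description precedes it below -/
import Mathlib

section
/- The infinite Thue–Morse word t, defined by t_b = (sum of binary digits of b) mod 2, is strongly cube-free: it contains no factor of the form u u first(u) for any nonempty word u. -/
/-- The Thue–Morse word: bit `n` is the parity of the number of 1s in the
binary expansion of `n`. -/
def tm (n : ℕ) : Fin 2 := Fin.ofNat 2 (Nat.digits 2 n).sum

/-- A finite word `u` is a factor of the infinite word `w` if it occurs as a
contiguous subword of `w`. -/
def IsFactorOf {α : Type*} (u : List α) (w : ℕ → α) : Prop :=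
  ∃ i : ℕ, u = (List.range u.length).map (fun j => w (i + j))

/-!
The Thue–Morse word satisfies `t (2k) = t k` and `t (2k+1) = t k + 1`, so `t (2a) ≠ t (2a+1)`,
and comparing letters of equal parity reduces to comparing their halves. A factor
`u u (first u)` is an overlap: a stretch `t i, …, t (i+2n)` with period `n = |u| ≥ 1`. If
`n = 2m`, halving gives an overlap of period `m`, and we descend. If `n` is odd, the period
carries every pair `t (i+k), t (i+k+1)` with `i+k` odd to a pair starting at an even index, so
`t` alternates on `[i, i+n]`; then `t (i+n) ≠ t i`, contradicting the period.
-/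

lemma tm_two_mul (k : ℕ) : tm (2 * k) = tm k := by
  rcases eq_or_ne k 0 with rfl | hk
  · rfl
  · simpa [tm] using congrArg (fun l : List ℕ => Fin.ofNat 2 l.sum)
      (Nat.digits_add 2 one_lt_two 0 k two_pos (Or.inr hk))

lemma tm_two_mul_add_one (k : ℕ) : tm (2 * k + 1) = tm k + 1 := by
  rw [tm, add_comm, Nat.digits_add 2 one_lt_two 1 k one_lt_two (Or.inl one_ne_zero), tm]
  ext
  simp only [List.sum_cons, Fin.ofNat, Fin.val_add]
  omega

lemma tm_eq_iff_of_mod_two_eq {x y : ℕ} (h : x % 2 = y % 2) :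
    tm x = tm y ↔ tm (x / 2) = tm (y / 2) := by
  rw [← Nat.div_add_mod x 2, ← Nat.div_add_mod y 2, ← h]
  rcases Nat.mod_two_eq_zero_or_one x with h0 | h1
  · simp [h0, tm_two_mul]
  · simp [h1, tm_two_mul_add_one, Nat.mul_add_div]

lemma Fin.fin_two_eq_iff_ne_of_ne {a b : Fin 2} (hab : a ≠ b) (c : Fin 2) : a = c ↔ b ≠ c := by
  revert a b c; decide

lemma Fin.fin_two_apply_eq_apply_zero_iff_even {f : ℕ → Fin 2} {n : ℕ}
    (h : ∀ k < n, f k ≠ f (k + 1)) : f n = f 0 ↔ Even n := by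
  induction n with
  | zero => simp
  | succ n ih =>
    rw [Fin.fin_two_eq_iff_ne_of_ne (h n n.lt_succ_self).symm, ne_eq,
      ih fun k hk => h k (by omega), Nat.even_add_one]

lemma tm_ne_succ_of_even {x : ℕ} (hx : Even x) : tm x ≠ tm (x + 1) := by
  obtain ⟨a, rfl⟩ := hx
  rw [← two_mul, tm_two_mul, tm_two_mul_add_one]
  generalize tm a = b
  revert b; decide

lemma tm_overlap_half {i m : ℕ} (h : ∀ j ≤ 2 * m, tm (i + j) = tm (i + j + 2 * m)) :
    ∀ j ≤ m, tm (i / 2 + j) = tm (i / 2 + j + m) := by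
  intro j hj
  have := h (2 * j) (by omega)
  rwa [tm_eq_iff_of_mod_two_eq (by omega), show (i + 2 * j) / 2 = i / 2 + j by omega,
    show (i + 2 * j + 2 * m) / 2 = i / 2 + j + m by omega] at this

lemma tm_ne_succ_of_overlap_odd {i n : ℕ} (hn : Odd n)
    (h : ∀ j ≤ n, tm (i + j) = tm (i + j + n)) : ∀ k < n, tm (i + k) ≠ tm (i + k + 1) := by
  intro k hk
  rcases Nat.even_or_odd (i + k) with heven | hodd
  · exact tm_ne_succ_of_even heven
  · rw [h k hk.le, add_assoc i k 1, h (k + 1) hk, ← add_assoc, add_right_comm _ 1]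
    exact tm_ne_succ_of_even (hodd.add_odd hn)

theorem tm_not_overlap {n : ℕ} (hn : n ≠ 0) (i : ℕ) :
    ¬ ∀ j ≤ n, tm (i + j) = tm (i + j + n) := by
  induction n using Nat.strong_induction_on generalizing i with
  | _ n ih =>
    intro h
    rcases Nat.even_or_odd' n with ⟨m, rfl | rfl⟩
    · exact ih m (by omega) (by omega) (i / 2) (tm_overlap_half h)
    · have hodd : Odd (2 * m + 1) := odd_two_mul_add_one m
      have halternate := Fin.fin_two_apply_eq_apply_zero_iff_even (f := fun k => tm (i + k))
        (tm_ne_succ_of_overlap_odd hodd h)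
      exact Nat.not_even_iff_odd.mpr hodd (halternate.mp (h 0 (Nat.zero_le _)).symm)

lemma IsFactorOf.exists_getElem?_eq {α : Type*} {u : List α} {w : ℕ → α} (h : IsFactorOf u w) :
    ∃ i, ∀ m < u.length, u[m]? = some (w (i + m)) := by
  obtain ⟨i, hi⟩ := h
  exact ⟨i, fun m hm => by rw [hi]; simp [hm]⟩

lemma List.getElem?_append_self_append_head {α : Type*} (u : List α) (hu : u ≠ []) {m : ℕ}
    (hm : m ≤ 2 * u.length) : (u ++ u ++ [u.head hu])[m]? = u[m % u.length]? := by
  rcases lt_or_eq_of_le hm with hlt | rfl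
  · rw [List.getElem?_append_left (by simp; omega)]
    rcases lt_or_ge m u.length with hm₁ | hm₁
    · rw [List.getElem?_append_left hm₁, Nat.mod_eq_of_lt hm₁]
    · rw [List.getElem?_append_right hm₁, Nat.mod_eq_sub_mod hm₁, Nat.mod_eq_of_lt (by omega)]
  · rw [List.getElem?_append_right (by simp; omega), Nat.mul_mod_left, List.length_append,
      ← two_mul, Nat.sub_self]
    simp [List.head_eq_getElem]

theorem stmt_6 (u : List (Fin 2)) (hu : u ≠ []) :
    ¬ IsFactorOf (u ++ u ++ [u.head hu]) tm := by
  intro hfac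
  obtain ⟨i, hi⟩ := hfac.exists_getElem?_eq
  have hlen : 0 < u.length := List.length_pos_iff.mpr hu
  refine tm_not_overlap hlen.ne' i fun j hj => Option.some.inj ?_
  simp only [List.length_append, List.length_singleton] at hi
  rw [← hi j (by omega), add_assoc, ← hi (j + u.length) (by omega),
    List.getElem?_append_self_append_head u hu (by omega),
    List.getElem?_append_self_append_head u hu (by omega), Nat.add_mod_right]
end

section
/- There exists an infinite square-free word over a three-letter alphabet: a function w : ℕ → Fin 3 such that no nonempty word u satisfies that uu is a factor of w. -/
/-! Thue's construction: the Thue–Morse word `t` is overlap-free, i.e. it contains no factor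
`axaxa` with `a` a letter. Decimation `t (2n) = t n`, `t (2n+1) = ¬ t n` turns an overlap of even
period `2m` into one of period `m`; an overlap of odd period forces `t` to alternate on a window
of length at least `6`, which contains the pattern `t n = t (n+1) = t (n+2)`, itself an overlap.
Coding each pair `t n t (n+1)` by a letter of a three-letter alphabet, with the two equal pairs
sharing a letter, gives a square-free word: the parity of `t (i+j) + t (i+j+k)` is constant along
a square of period `k`, and is then either an overlap of `t` or forces `t` to be constant. -/

section Words

variable {α : Type*}

/-- The factor `w i ⋯ w (i + 2k - 1)` is a square `xx` with `|x| = k`. -/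
def HasSquareAt (w : ℕ → α) (i k : ℕ) : Prop := ∀ j < k, w (i + j) = w (i + j + k)

/-- The factor `w i ⋯ w (i + 2k)` is an overlap `axaxa` with `|ax| = k`. -/
def HasOverlapAt (w : ℕ → α) (i k : ℕ) : Prop := ∀ j ≤ k, w (i + j) = w (i + j + k)

def OverlapFree (w : ℕ → α) : Prop := ∀ i k, 0 < k → ¬ HasOverlapAt w i k

theorem IsFactorOf.exists_hasSquareAt {u : List α} {w : ℕ → α} (h : IsFactorOf (u ++ u) w) :
    ∃ i, HasSquareAt w i u.length := by
  obtain ⟨i, hi⟩ := h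
  have hget : ∀ j (hj : j < (u ++ u).length), (u ++ u)[j] = w (i + j) := fun j hj => by
    rw [List.getElem_of_eq hi hj, List.getElem_map, List.getElem_range]
  refine ⟨i, fun j hj => ?_⟩
  have h₁ := hget j (by simp; omega)
  have h₂ := hget (j + u.length) (by simp; omega)
  rw [List.getElem_append_left (by omega)] at h₁
  rw [List.getElem_append_right (by omega)] at h₂
  simp only [Nat.add_sub_cancel] at h₂
  rw [← h₁, h₂, add_assoc]

end Words

def thueMorse (n : ℕ) : Bool := (Nat.digits 2 n).sum.bodd

theorem thueMorse_eq_xor_div_two (n : ℕ) : thueMorse n = xor n.bodd (thueMorse (n / 2)) := by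
  rcases Nat.eq_zero_or_pos n with rfl | hn
  · rfl
  · rw [thueMorse, Nat.digits_def' (by norm_num) hn, List.sum_cons, Nat.bodd_add, thueMorse]
    congr 1
    rcases Nat.mod_two_eq_zero_or_one n with h | h <;> simp [h, Nat.bodd]

theorem thueMorse_two_mul (n : ℕ) : thueMorse (2 * n) = thueMorse n := by
  simp [thueMorse_eq_xor_div_two (2 * n), Nat.bodd_mul]

theorem thueMorse_two_mul_add_one (n : ℕ) : thueMorse (2 * n + 1) = !thueMorse n := by
  simp [thueMorse_eq_xor_div_two (2 * n + 1), Nat.bodd_mul, Nat.add_div]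

theorem thueMorse_ne_succ_of_even {x : ℕ} (hx : Even x) : thueMorse x ≠ thueMorse (x + 1) := by
  obtain ⟨n, rfl⟩ := hx
  simp [← two_mul, thueMorse_two_mul, thueMorse_two_mul_add_one]

theorem thueMorse_eq_iff_of_bodd_eq {x y : ℕ} (h : x.bodd = y.bodd) :
    thueMorse x = thueMorse y ↔ thueMorse (x / 2) = thueMorse (y / 2) := by
  rw [thueMorse_eq_xor_div_two x, thueMorse_eq_xor_div_two y, h, Bool.xor_right_inj]

theorem thueMorse_odd_ne_succ_iff (n : ℕ) :
    thueMorse (2 * n + 1) ≠ thueMorse (2 * n + 2) ↔ thueMorse n = thueMorse (n + 1) := by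
  rw [show 2 * n + 2 = 2 * (n + 1) by ring, thueMorse_two_mul, thueMorse_two_mul_add_one]
  cases thueMorse n <;> cases thueMorse (n + 1) <;> decide

theorem thueMorse_ne_succ_of_odd_period {x k : ℕ} (hk : Odd k)
    (h₀ : thueMorse x = thueMorse (x + k)) (h₁ : thueMorse (x + 1) = thueMorse (x + k + 1)) :
    thueMorse x ≠ thueMorse (x + 1) ∧ thueMorse (x + k) ≠ thueMorse (x + k + 1) := by
  rw [← h₀, ← h₁, and_self]
  rcases Nat.even_or_odd x with hx | hx
  · exact thueMorse_ne_succ_of_even hx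
  · rw [h₀, h₁]
    exact thueMorse_ne_succ_of_even (hx.add_odd hk)

theorem HasOverlapAt.thueMorse_div_two {i m : ℕ} (h : HasOverlapAt thueMorse i (2 * m)) :
    HasOverlapAt thueMorse (i / 2) m := by
  intro j hj
  have := h (2 * j) (by omega)
  rw [thueMorse_eq_iff_of_bodd_eq (by simp [Nat.bodd_add, Nat.bodd_mul])] at this
  convert this using 2 <;> omega

theorem HasOverlapAt.thueMorse_ne_succ {i k x : ℕ} (h : HasOverlapAt thueMorse i k) (hk : Odd k)
    (hix : i ≤ x) (hxk : x < i + 2 * k) : thueMorse x ≠ thueMorse (x + 1) := by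
  have key : ∀ y, i ≤ y → y < i + k →
      thueMorse y ≠ thueMorse (y + 1) ∧ thueMorse (y + k) ≠ thueMorse (y + k + 1) := by
    intro y hiy hyk
    obtain ⟨j, rfl⟩ : ∃ j, y = i + j := ⟨y - i, by omega⟩
    refine thueMorse_ne_succ_of_odd_period hk (h j (by omega)) ?_
    convert h (j + 1) (by omega) using 2 <;> omega
  rcases lt_or_ge x (i + k) with hx | hx
  · exact (key x hix hx).1
  · obtain ⟨y, rfl⟩ : ∃ y, x = y + k := ⟨x - k, by omega⟩
    exact (key y (by omega) (by omega)).2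

theorem thueMorse_overlapFree : OverlapFree thueMorse := by
  intro i k hk h
  induction k using Nat.strong_induction_on generalizing i with
  | _ k ih =>
  rcases Nat.even_or_odd' k with ⟨m, rfl | rfl⟩
  · exact ih m (by omega) (i / 2) (by omega) h.thueMorse_div_two
  · rcases Nat.eq_zero_or_pos m with rfl | hm
    · exact h.thueMorse_ne_succ odd_one le_rfl (by omega) (by simpa using h 0 (by omega))
    · obtain ⟨n, hn⟩ : ∃ n, 2 * n ≤ i ∧ i ≤ 2 * n + 1 := ⟨i / 2, by omega⟩
      have hodd : Odd (2 * m + 1) := odd_two_mul_add_one m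
      have h₀ := (thueMorse_odd_ne_succ_iff n).1 (h.thueMorse_ne_succ hodd (by omega) (by omega))
      have h₁ := (thueMorse_odd_ne_succ_iff (n + 1)).1
        (h.thueMorse_ne_succ hodd (by omega) (by omega))
      refine ih 1 (by omega) n one_pos fun j hj => ?_
      interval_cases j
      · exact h₀
      · exact h₁

def pairCode (a b : Bool) : Fin 3 := if a = b then 0 else if b then 1 else 2

theorem xor_eq_xor_of_pairCode_eq {a b c d : Bool} (h : pairCode a b = pairCode c d) :
    xor b d = xor a c := by
  revert a b c d; decide

theorem eq_of_pairCode_eq_pairCode_not {a b : Bool} (h : pairCode a b = pairCode (!a) (!b)) :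
    a = b := by
  revert a b; decide

theorem not_hasSquareAt_pairCode {t : ℕ → Bool} (ht : OverlapFree t) {i k : ℕ} (hk : 0 < k) :
    ¬ HasSquareAt (fun n => pairCode (t n) (t (n + 1))) i k := by
  intro hsq
  have hxor : ∀ j ≤ k, xor (t (i + j)) (t (i + j + k)) = xor (t i) (t (i + k)) := by
    intro j hj
    induction j with
    | zero => rfl
    | succ j ih =>
      rw [← ih (by omega), ← xor_eq_xor_of_pairCode_eq (hsq j (by omega))]
      congr 2; omega
  cases hxi : xor (t i) (t (i + k))
  · exact ht i k hk fun j hj => by simpa [hxi] using hxor j hj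
  · have hneg : ∀ j ≤ k, t (i + j + k) = !t (i + j) := fun j hj => by
      simpa [hxi, eq_comm (a := t (i + j + k)), Bool.eq_not_iff] using hxor j hj
    have hconst : ∀ j ≤ k, t (i + j) = t i := by
      intro j hj
      induction j with
      | zero => rfl
      | succ j ih =>
        have hstep : pairCode (t (i + j)) (t (i + j + 1)) =
            pairCode (t (i + j + k)) (t (i + j + k + 1)) := hsq j (by omega)
        have hshift : t (i + j + k + 1) = !t (i + j + 1) := by
          simpa only [← add_assoc, add_right_comm _ 1 k] using hneg (j + 1) hj
        rw [hneg j (by omega), hshift] at hstep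
        rw [← ih (by omega), eq_of_pairCode_eq_pairCode_not hstep]
        rfl
    simp [hconst k le_rfl] at hxi

theorem stmt_8 :
    ∃ w : ℕ → Fin 3, ∀ u : List (Fin 3), u ≠ [] → ¬ IsFactorOf (u ++ u) w := by
  refine ⟨fun n => pairCode (thueMorse n) (thueMorse (n + 1)), fun u hu hfac => ?_⟩
  obtain ⟨i, hi⟩ := hfac.exists_hasSquareAt
  exact not_hasSquareAt_pairCode thueMorse_overlapFree (List.length_pos_iff.mpr hu) hi
end

section
/- If a cube www (w nonempty) contains another cube xxx (x nonempty) as a factor, then either |x| = |w|, or x x first(x) is a factor of ww (the first two occurrences of w), or last(x) x x is a factor of the last two occurrences ww. -/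
/-!
Write the occurrence as `s ++ x ++ x ++ x ++ t = w ++ w ++ w` and assume `|x| < |w|`. If the factor
`x ++ x ++ [first x]`, which starts at position `|s|`, ends inside the first two copies of `w`, it is
a factor of `w ++ w`. Otherwise `|s| + 2|x| ≥ 2|w|`, so the factor `[last x] ++ x ++ x`, which starts
at position `|s| + |x| - 1 ≥ 2|w| - |x| - 1 ≥ |w|`, lies in the last two copies of `w`.
-/

namespace List

variable {α : Type*} {s u t l₁ l₂ : List α}

theorem infix_left_of_append_eq_append (h : s ++ u ++ t = l₁ ++ l₂)
    (hlen : (s ++ u).length ≤ l₁.length) : u <:+: l₁ := by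
  have hpre : s ++ u <+: (l₁ ++ l₂).take l₁.length :=
    prefix_take_iff.2 ⟨h ▸ prefix_append _ _, hlen⟩
  rw [take_left] at hpre
  exact (suffix_append s u).isInfix.trans hpre.isInfix

theorem infix_right_of_append_eq_append (h : s ++ u ++ t = l₁ ++ l₂)
    (hlen : l₁.length ≤ s.length) : u <:+: l₂ := by
  have hdrop : (l₁ ++ l₂).drop l₁.length = s.drop l₁.length ++ (u ++ t) := by
    rw [← h, append_assoc, drop_append_of_le_length hlen]
  rw [drop_left] at hdrop
  exact (prefix_append u t).isInfix.trans (hdrop ▸ suffix_append _ _).isInfix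

end List

open List

theorem stmt_9_general {α : Type*} (w x : List α) (hx : x ≠ [])
    (h : (x ++ x ++ x) <:+: (w ++ w ++ w)) :
    x.length = w.length ∨
    (x ++ x ++ [x.head hx]) <:+: (w ++ w) ∨
    ([x.getLast hx] ++ x ++ x) <:+: (w ++ w) := by
  obtain ⟨s, t, hst⟩ := h
  have hx0 : 0 < x.length := length_pos_iff.2 hx
  have hlen := congrArg length hst
  simp only [length_append] at hlen
  rcases (show x.length ≤ w.length by omega).eq_or_lt with heq | hlt
  · exact Or.inl heq
  by_cases hfits : s.length + (2 * x.length + 1) ≤ 2 * w.length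
  · have hsplit : s ++ (x ++ x ++ [x.head hx]) ++ (x.tail ++ t) = w ++ w ++ w := by
      rw [← hst]
      simp only [append_assoc]
      rw [← append_assoc [_], singleton_append, cons_head_tail]
    refine Or.inr (Or.inl (infix_left_of_append_eq_append hsplit ?_))
    simp only [length_append, length_singleton]
    omega
  · have hsplit : s ++ x.dropLast ++ ([x.getLast hx] ++ x ++ x) ++ t = w ++ (w ++ w) := by
      rw [← append_assoc w, ← hst]
      simp only [append_assoc]
      rw [← append_assoc x.dropLast, dropLast_append_getLast]
    refine Or.inr (Or.inr (infix_right_of_append_eq_append hsplit ?_))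
    simp only [length_append, length_dropLast]
    omega

theorem stmt_9 {α : Type*} (w x : List α) (hw : w ≠ []) (hx : x ≠ [])
    (h : (x ++ x ++ x) <:+: (w ++ w ++ w)) :
    x.length = w.length ∨
    (x ++ x ++ [x.head hx]) <:+: (w ++ w) ∨
    ([x.getLast hx] ++ x ++ x) <:+: (w ++ w) :=
  stmt_9_general w x hx h
end

section
/- For each k ≥ 1 there exists a sequence of positive integers x_1 < x_2 < ... < x_k (with x_i + 1 < x_{i+1}) such that whenever nonnegative integers a_1,...,a_k satisfy Σ a_i x_i = 2 Σ x_i, it follows that a_1 = a_2 = ... = a_k = 2. -/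
/-
Take x_i = B^k + B^i (0 ≤ i < k) with B = 2k + 1. Writing S = Σ a_i, the sum Σ a_i x_i is the
number with base-B digits a_0, …, a_{k-1}, S, while 2 Σ x_i has digits 2, …, 2, 2k. Comparing
the top digit gives S ≤ 2k < B, so every a_i ≤ S is a genuine base-B digit, and uniqueness of
base-B expansions forces a_i = 2.
-/

open Finset

section Digits

variable {B n : ℕ}

theorem Fin.sum_mul_pow_lt {d : Fin n → ℕ} (hd : ∀ i, d i < B) :
    ∑ i, d i * B ^ (i : ℕ) < B ^ n := by
  simpa only [finFunctionFinEquiv_apply] using (finFunctionFinEquiv fun i => ⟨d i, hd i⟩).isLt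

theorem Fin.eq_of_sum_mul_pow_eq {d e : Fin n → ℕ} (hd : ∀ i, d i < B) (he : ∀ i, e i < B)
    (h : ∑ i, d i * B ^ (i : ℕ) = ∑ i, e i * B ^ (i : ℕ)) : d = e := by
  have key := (finFunctionFinEquiv (m := B) (n := n)).injective
    (a₁ := fun i => ⟨d i, hd i⟩) (a₂ := fun i => ⟨e i, he i⟩)
    (Fin.ext (by simpa only [finFunctionFinEquiv_apply] using h))
  funext i
  exact congrArg Fin.val (congrFun key i)

theorem Fin.sum_snoc_mul_pow (d : Fin n → ℕ) (t : ℕ) :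
    ∑ i, Fin.snoc (α := fun _ => ℕ) d t i * B ^ (i : ℕ) =
      ∑ i, d i * B ^ (i : ℕ) + t * B ^ n := by
  simp only [Fin.sum_univ_castSucc, Fin.snoc_castSucc, Fin.snoc_last, Fin.val_castSucc,
    Fin.val_last]

end Digits

theorem sum_mul_pow_add_pow_eq_sum_snoc (B k : ℕ) (a : Fin k → ℕ) :
    ∑ i, a i * (B ^ k + B ^ (i : ℕ)) =
      ∑ i, Fin.snoc (α := fun _ => ℕ) a (∑ i, a i) i * B ^ (i : ℕ) := by
  rw [Fin.sum_snoc_mul_pow, sum_mul, add_comm]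
  simp only [mul_add, sum_add_distrib]

theorem eq_of_sum_mul_pow_add_pow_eq {B k c : ℕ} (hB : c * k < B) {a : Fin k → ℕ}
    (h : ∑ i, a i * (B ^ k + B ^ (i : ℕ)) = c * ∑ i : Fin k, (B ^ k + B ^ (i : ℕ))) :
    ∀ i, a i = c := by
  have hc : ∀ i : Fin k, c < B := fun i =>
    lt_of_le_of_lt (Nat.le_mul_of_pos_right c (Fin.pos i)) hB
  rw [mul_sum, sum_mul_pow_add_pow_eq_sum_snoc B k (fun _ => c),
    sum_mul_pow_add_pow_eq_sum_snoc] at h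
  simp only [sum_const, card_univ, Fintype.card_fin, smul_eq_mul] at h
  have hS : ∑ i, a i < B := by
    have hsplit := h
    rw [Fin.sum_snoc_mul_pow, Fin.sum_snoc_mul_pow] at hsplit
    have hlow : ∑ i : Fin k, c * B ^ (i : ℕ) < B ^ k := Fin.sum_mul_pow_lt hc
    have : (∑ i, a i) * B ^ k < (k * c + 1) * B ^ k := by
      rw [add_mul, one_mul]
      linarith [Nat.zero_le (∑ i, a i * B ^ (i : ℕ))]
    have := lt_of_mul_lt_mul_right this (Nat.zero_le _)
    rw [mul_comm] at hB
    omega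
  have ha : ∀ i, a i < B := fun i =>
    lt_of_le_of_lt (single_le_sum (fun j _ => Nat.zero_le (a j)) (mem_univ i)) hS
  have hdigits := Fin.eq_of_sum_mul_pow_eq
    (Fin.lastCases (by simpa only [Fin.snoc_last] using hS)
      (fun i => by simpa only [Fin.snoc_castSucc] using ha i))
    (Fin.lastCases (by simpa only [Fin.snoc_last, mul_comm] using hB)
      (fun i => by simpa only [Fin.snoc_castSucc] using hc i)) h
  intro i
  simpa only [Fin.snoc_castSucc] using congrFun hdigits i.castSucc

theorem stmt_10_general (k : ℕ) :
    ∃ x : Fin k → ℕ,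
      (∀ i, 0 < x i) ∧
      (∀ (i : ℕ) (h : i + 1 < k), x ⟨i, Nat.lt_of_succ_lt h⟩ + 1 < x ⟨i + 1, h⟩) ∧
      ∀ a : Fin k → ℕ,
        (∑ i, a i * x i) = 2 * ∑ i, x i → ∀ i, a i = 2 := by
  refine ⟨fun i => (2 * k + 1) ^ k + (2 * k + 1) ^ (i : ℕ), fun i => by positivity,
    fun i hi => ?_, fun a h => eq_of_sum_mul_pow_add_pow_eq (by omega) h⟩
  have hpow : (2 * k + 1) ^ (i + 1) = (2 * k + 1) ^ i * (2 * k + 1) := pow_succ _ _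
  have hpos : 1 ≤ (2 * k + 1) ^ i := Nat.one_le_pow _ _ (by omega)
  dsimp only
  nlinarith [hi]

theorem stmt_10 (k : ℕ) (hk : 1 ≤ k) :
    ∃ x : Fin k → ℕ,
      (∀ i, 0 < x i) ∧
      (∀ (i : ℕ) (h : i + 1 < k), x ⟨i, Nat.lt_of_succ_lt h⟩ + 1 < x ⟨i + 1, h⟩) ∧
      ∀ a : Fin k → ℕ,
        (∑ i, a i * x i) = 2 * ∑ i, x i → ∀ i, a i = 2 :=
  stmt_10_general k
end

section
/- Define x_{1,1} = 1, and given x_{1,k-1},...,x_{k-1,k-1}, set x_{i,k} = 3·x_{i,k-1} for i < k and x_{k,k} = 3u + 2 where u is chosen with 3u + 2 > 2·Σ_{i<k} x_{i,k-1}. Then for all nonnegative integers a_1,...,a_k: Σ_{i=1}^k a_i x_{i,k} = 2 Σ_{i=1}^k x_{i,k} implies a_i = 2 for all i. -/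
open Finset

theorem sum_Icc_succ_mul_eq_three_mul_add {x : ℕ → ℕ → ℕ} {k : ℕ}
    (hstep : ∀ i, 1 ≤ i → i < k + 1 → x i (k + 1) = 3 * x i k) (a : ℕ → ℕ) :
    ∑ i ∈ Icc 1 (k + 1), a i * x i (k + 1) =
      3 * ∑ i ∈ Icc 1 k, a i * x i k + a (k + 1) * x (k + 1) (k + 1) := by
  rw [sum_Icc_succ_top (by omega), mul_sum]
  congr 1
  refine sum_congr rfl fun i hi => ?_
  rw [mem_Icc] at hi
  rw [hstep i hi.1 (by omega)]
  ring

/-- Reducing mod 3 forces `a ≡ 2`, and `a ≥ 5` already overshoots because `3u + 2 > 2S`. -/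
theorem eq_two_and_eq_two_mul_of_three_mul_add {T S a u : ℕ} (hu : 2 * S < 3 * u + 2)
    (h : 3 * T + a * (3 * u + 2) = 2 * (3 * S + (3 * u + 2))) : a = 2 ∧ T = 2 * S := by
  rw [show a * (3 * u + 2) = 3 * (a * u) + 2 * a by ring] at h
  have ha : a < 5 := by
    by_contra! h5
    have : 5 * u ≤ a * u := Nat.mul_le_mul_right u h5
    omega
  obtain rfl : a = 2 := by omega
  omega

theorem stmt_11 (x : ℕ → ℕ → ℕ)
    (hbase : x 1 1 = 1)
    (hstep : ∀ k, 2 ≤ k → ∀ i, 1 ≤ i → i < k → x i k = 3 * x i (k - 1))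
    (hlast : ∀ k, 2 ≤ k → ∃ u : ℕ, x k k = 3 * u + 2 ∧
      3 * u + 2 > 2 * ∑ i ∈ Finset.Icc 1 (k - 1), x i (k - 1)) :
    ∀ k, 1 ≤ k → ∀ a : ℕ → ℕ,
      (∑ i ∈ Finset.Icc 1 k, a i * x i k) = 2 * ∑ i ∈ Finset.Icc 1 k, x i k →
      ∀ i ∈ Finset.Icc 1 k, a i = 2 := by
  intro k hk
  induction k, hk using Nat.le_induction with
  | base =>
    intro a h i hi
    rw [Icc_self, mem_singleton] at hi
    subst hi
    simpa [hbase] using h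
  | succ k _ ih =>
    intro a h i hi
    have hstep' : ∀ i, 1 ≤ i → i < k + 1 → x i (k + 1) = 3 * x i k := fun i h₁ h₂ => by
      simpa using hstep (k + 1) (by omega) i h₁ h₂
    obtain ⟨u, hu, hgt⟩ := hlast (k + 1) (by omega)
    rw [Nat.add_sub_cancel] at hgt
    have hsum := sum_Icc_succ_mul_eq_three_mul_add hstep' (fun _ => 1)
    simp only [one_mul] at hsum
    rw [sum_Icc_succ_mul_eq_three_mul_add hstep', hsum, hu] at h
    obtain ⟨hcoeff, hprev⟩ := eq_two_and_eq_two_mul_of_three_mul_add hgt h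
    rw [mem_Icc] at hi
    rcases Nat.lt_or_ge i (k + 1) with hik | hik
    · exact ih a hprev i (mem_Icc.mpr ⟨hi.1, by omega⟩)
    · rwa [show i = k + 1 by omega]
end

section
/- The Thue–Morse word is not eventually constant along any infinite arithmetic progression: for any a ≥ 1 and b, the sequence n ↦ t(an + b) is not eventually constant. -/
open Fin.NatCast Fin.CommRing

lemma tm_zero : tm 0 = 0 := rfl

lemma tm_eq_tm_div_two_add (n : ℕ) : tm n = tm (n / 2) + (n % 2 : ℕ) := by
  rcases Nat.eq_zero_or_pos n with rfl | hn
  · rfl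
  · simp only [tm, Fin.ofNat_eq_cast, Nat.digits_def' one_lt_two hn, List.sum_cons, Nat.cast_add]
    exact add_comm _ _

lemma tm_two_pow_mul_add {k v : ℕ} (u : ℕ) (hv : v < 2 ^ k) :
    tm (2 ^ k * u + v) = tm u + tm v := by
  induction k generalizing v with
  | zero =>
    obtain rfl : v = 0 := by omega
    simp [tm_zero]
  | succ k ih =>
    have hpow : 2 ^ (k + 1) * u = 2 * (2 ^ k * u) := by ring
    have hdiv : (2 ^ (k + 1) * u + v) / 2 = 2 ^ k * u + v / 2 := by omega
    have hmod : (2 ^ (k + 1) * u + v) % 2 = v % 2 := by omega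
    rw [tm_eq_tm_div_two_add, hdiv, hmod, ih (by omega), tm_eq_tm_div_two_add v, add_assoc]

lemma tm_two_pow_sub_one_sub {k x : ℕ} (hx : x < 2 ^ k) : tm (2 ^ k - 1 - x) = k + tm x := by
  induction k generalizing x with
  | zero =>
    obtain rfl : x = 0 := by omega
    rfl
  | succ k ih =>
    have hpow : 2 ^ (k + 1) = 2 * 2 ^ k := by ring
    have hdiv : (2 ^ (k + 1) - 1 - x) / 2 = 2 ^ k - 1 - x / 2 := by omega
    rw [tm_eq_tm_div_two_add, hdiv, ih (by omega), tm_eq_tm_div_two_add x, Nat.cast_succ]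
    rcases Nat.mod_two_eq_zero_or_one x with h | h
    · rw [show (2 ^ (k + 1) - 1 - x) % 2 = 1 by omega, h]
      push_cast
      ring
    · rw [show (2 ^ (k + 1) - 1 - x) % 2 = 0 by omega, h]
      push_cast
      rw [add_add_add_comm, CharTwo.add_self_eq_zero, add_zero]

lemma tm_mul_two_pow_sub_one {a k : ℕ} (ha : 1 ≤ a) (hak : a ≤ 2 ^ k) :
    tm (a * (2 ^ k - 1)) = k := by
  have hsplit : a * (2 ^ k - 1) = 2 ^ k * (a - 1) + (2 ^ k - 1 - (a - 1)) := by
    zify [Nat.one_le_two_pow, ha, (by omega : a - 1 ≤ 2 ^ k - 1)]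
    ring
  rw [hsplit, tm_two_pow_mul_add _ (by omega), tm_two_pow_sub_one_sub (by omega), add_left_comm,
    CharTwo.add_self_eq_zero, add_zero]

theorem stmt_13 (a b : ℕ) (ha : 1 ≤ a) :
    ¬ ∃ (c : Fin 2) (N : ℕ), ∀ n, N ≤ n → tm (a * n + b) = c := by
  rintro ⟨c, N, hconst⟩
  have hb : b < 2 ^ (b + N) := (Nat.lt_two_pow_self).trans_le' (by omega)
  have hmul (m : ℕ) (hm : 1 ≤ m) : tm (a * m) = c - tm b := by
    have hN : N ≤ 2 ^ (b + N) * m :=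
      (Nat.lt_two_pow_self).le.trans (Nat.le_mul_of_pos_right _ hm) |>.trans' (by omega)
    rw [eq_sub_iff_add_eq, ← tm_two_pow_mul_add _ hb, ← hconst _ hN, mul_left_comm]
  have hlt : a < 2 ^ a := Nat.lt_two_pow_self
  have hpow : 2 ^ (a + 1) = 2 * 2 ^ a := by ring
  have h₁ := hmul (2 ^ a - 1) (by omega)
  have h₂ := hmul (2 ^ (a + 1) - 1) (by omega)
  rw [tm_mul_two_pow_sub_one ha hlt.le, ← h₂, tm_mul_two_pow_sub_one ha (by omega), Nat.cast_succ,
    left_eq_add] at h₁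
  exact one_ne_zero h₁
end

section
/- If an NFA M (without ε-transitions) accepts a word w of length n via a unique accepting path of length n, and some state p is visited at least k+1 times during this accepting computation (k ≥ 2), then w contains a k-th power as a factor: there exists a nonempty word c such that c^k is a factor of w. -/
/-- `IsAccPath M n v s` says that `s` is an accepting path of length `n` in the
NFA `M` (no ε-transitions) spelling the word `v`: it starts in a start state,
ends in an accepting state, and each step follows a transition labeled by the
corresponding letter of `v`. -/
def IsAccPath {α σ : Type*} (M : NFA α σ) (n : ℕ) (v : List α)
    (s : Fin (n + 1) → σ) : Prop :=
  ∃ h : v.length = n,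
    s 0 ∈ M.start ∧ s (Fin.last n) ∈ M.accept ∧
    ∀ i : Fin n, s i.succ ∈ M.step (s i.castSucc) (v.get (Fin.cast h.symm i))

/-- `UniquelyAccepts M w` says that `M` accepts `w` and there is exactly one
accepting path of length `|w|` over all words of length `|w|`; it spells `w`. -/
def UniquelyAccepts {α σ : Type*} (M : NFA α σ) (w : List α) : Prop :=
  (∃ s, IsAccPath M w.length w s) ∧
  (∀ (v : List α) (s : Fin (w.length + 1) → σ), IsAccPath M w.length v s → v = w) ∧
  (∀ s s' : Fin (w.length + 1) → σ,
    IsAccPath M w.length w s → IsAccPath M w.length w s' → s = s')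

/-- `listPow c k` is the `k`-fold concatenation of the word `c` with itself. -/
def listPow {α : Type*} (c : List α) (k : ℕ) : List α := (List.replicate k c).flatten

/-!
Cut the unique accepting run at three visits `a ≤ b ≤ c` of one state: the loops reading
`w[a,b)` and `w[b,c)` can be traversed in either order, and the resulting run is again
accepting, so by uniqueness both orders spell `w` and the two factors commute. Among the `k`
loops between consecutive visits of `p` take a shortest one, reading `x` with `|x| = d ≥ 1`;
it commutes with the factors read before and after it, hence with the whole factor `z` read
between the first and the last visit, and `|z| ≥ k d`. A word commuting with `x` and of length
at least `k |x|` begins with `x ^ k`.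
-/

theorem Fin.sum_succ_sub_castSucc_of_monotone {k : ℕ} (f : Fin (k + 1) → ℕ)
    (hf : Monotone f) :
    ∑ i : Fin k, (f i.succ - f i.castSucc) = f (Fin.last k) - f 0 := by
  induction k with
  | zero => simp
  | succ k ih =>
    have h := ih (fun i => f i.castSucc) (hf.comp Fin.strictMono_castSucc.monotone)
    rw [Fin.sum_univ_castSucc]
    have hle : f 0 ≤ f (Fin.last k).castSucc := hf (Fin.zero_le _)
    have hstep : f (Fin.last k).castSucc ≤ f (Fin.last k).succ := hf (Fin.castSucc_le_succ _)
    simp only [Fin.succ_castSucc, Fin.castSucc_zero] at h ⊢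
    rw [← Fin.succ_last]
    omega

theorem Fin.exists_mul_succ_sub_castSucc_le {k : ℕ} (hk : 0 < k) (f : Fin (k + 1) → ℕ)
    (hf : Monotone f) :
    ∃ m : Fin k, k * (f m.succ - f m.castSucc) ≤ f (Fin.last k) - f 0 := by
  have : Nonempty (Fin k) := ⟨⟨0, hk⟩⟩
  obtain ⟨m, -, hm⟩ := Finset.exists_le_of_sum_le Finset.univ_nonempty
    (f := fun m : Fin k => k * (f m.succ - f m.castSucc)) (g := fun _ => f (Fin.last k) - f 0)
    (by simp [← Finset.mul_sum, Fin.sum_succ_sub_castSucc_of_monotone f hf])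
  exact ⟨m, hm⟩

theorem listPow_succ {α : Type*} (c : List α) (k : ℕ) :
    listPow c (k + 1) = c ++ listPow c k := by
  simp [listPow, List.replicate_succ]

theorem listPow_prefix_of_append_comm {α : Type*} {x y : List α} (h : x ++ y = y ++ x) {j : ℕ}
    (hj : j * y.length ≤ x.length) : listPow y j <+: x := by
  induction j generalizing x with
  | zero => simp [listPow]
  | succ j ih =>
    have hyx : y <+: x :=
      List.prefix_of_prefix_length_le (h ▸ List.prefix_append y x) (List.prefix_append x y)
        (by nlinarith)
    obtain ⟨x', rfl⟩ := hyx
    have h' : x' ++ y = y ++ x' := by simpa using h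
    rw [listPow_succ, List.prefix_append_right_inj]
    rw [List.length_append] at hj
    exact ih h' (by nlinarith)

theorem List.extract_append_extract {α : Type*} (l : List α) {i j k : ℕ} (hij : i ≤ j)
    (hjk : j ≤ k) :
    l.extract i j ++ l.extract j k = l.extract i k := by
  simp only [List.extract_eq_take_drop]
  rw [show k - i = (j - i) + (k - j) by omega, List.take_add, List.drop_drop]
  congr 3; omega

theorem List.extract_add_one {α : Type*} (l : List α) {i j : ℕ} (hij : i ≤ j)
    (hj : j < l.length) :
    l.extract i (j + 1) = l.extract i j ++ [l[j]] := by
  simp only [List.extract_eq_take_drop]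
  rw [show j + 1 - i = (j - i) + 1 by omega, List.take_add_one, List.getElem?_drop,
    show i + (j - i) = j by omega, List.getElem?_eq_getElem hj, Option.toList_some]

theorem List.length_extract_of_le {α : Type*} (l : List α) {i j : ℕ} (hj : j ≤ l.length) :
    (l.extract i j).length = j - i := by
  simp only [List.extract_eq_take_drop, List.length_take, List.length_drop]
  omega

theorem List.extract_infix {α : Type*} (l : List α) (i j : ℕ) : l.extract i j <:+: l := by
  rw [List.extract_eq_take_drop]
  exact (List.take_prefix _ _).isInfix.trans (List.drop_suffix _ _).isInfix

section Runs
variable {α σ : Type*} {M : NFA α σ}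

theorem IsAccPath.mem_evalFrom_extract {n : ℕ} {w : List α} {s : Fin (n + 1) → σ}
    (hs : IsAccPath M n w s) {S : Set σ} {i : Fin (n + 1)} (hi : s i ∈ S) :
    ∀ j, i ≤ j → s j ∈ M.evalFrom S (w.extract i j) := by
  obtain ⟨rfl, -, -, hstep⟩ := hs
  refine Fin.induction (fun hi0 => ?_) (fun j ih hij => ?_)
  · obtain rfl : i = 0 := Fin.le_zero_iff.mp hi0
    simpa using hi
  · by_cases hij' : i ≤ j.castSucc
    · rw [Fin.val_succ, List.extract_add_one w (j := j) hij' j.isLt, NFA.evalFrom_append,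
        NFA.evalFrom_singleton]
      exact NFA.mem_stepSet.mpr ⟨_, ih hij', by simpa using hstep j⟩
    · obtain rfl : i = j.succ := le_antisymm hij (Fin.castSucc_lt_iff_succ_le.mp (not_le.mp hij'))
      simpa using hi

theorem exists_path_of_mem_evalFrom {q q' : σ} :
    ∀ {v : List α}, q' ∈ M.evalFrom {q} v → ∃ s : Fin (v.length + 1) → σ, s 0 = q ∧
      s (Fin.last _) = q' ∧ ∀ i : Fin v.length, s i.succ ∈ M.step (s i.castSucc) v[i]
  | [], h => ⟨fun _ => q, rfl, by simpa using h.symm, fun i => i.elim0⟩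
  | a :: v, h => by
    rw [NFA.evalFrom_cons, NFA.stepSet_singleton, NFA.mem_evalFrom_iff_exists] at h
    obtain ⟨q₁, hq₁, h⟩ := h
    obtain ⟨s, hs0, hsl, hstep⟩ := exists_path_of_mem_evalFrom h
    refine ⟨Fin.cons q s, rfl, by simpa [← Fin.succ_last] using hsl, Fin.cases ?_ fun i => ?_⟩
    · simpa [hs0] using hq₁
    · simpa [← Fin.succ_castSucc] using hstep i

theorem exists_isAccPath_of_mem_accepts {n : ℕ} {v : List α} (hv : v ∈ M.accepts)
    (hn : v.length = n) : ∃ s, IsAccPath M n v s := by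
  subst hn
  obtain ⟨q', hq', hv⟩ := NFA.mem_accepts.mp hv
  obtain ⟨q, hq, hv⟩ := NFA.mem_evalFrom_iff_exists.mp hv
  obtain ⟨s, hs0, hsl, hstep⟩ := exists_path_of_mem_evalFrom hv
  exact ⟨s, rfl, hs0 ▸ hq, hsl ▸ hq', fun i => by simpa using hstep i⟩

theorem UniquelyAccepts.extract_append_comm {w : List α} (hacc : UniquelyAccepts M w)
    {s : Fin (w.length + 1) → σ} (hs : IsAccPath M w.length w s) {a b c : Fin (w.length + 1)}
    (hab : a ≤ b) (hbc : b ≤ c) (hsab : s a = s b) (hsbc : s b = s c) :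
    w.extract a b ++ w.extract b c = w.extract b c ++ w.extract a b := by
  have hw : w.extract 0 a ++ (w.extract a b ++ (w.extract b c ++ w.extract c w.length)) = w := by
    have hcn : (c : ℕ) ≤ w.length := c.is_le
    have hbn : (b : ℕ) ≤ w.length := Nat.le_trans hbc hcn
    rw [List.extract_append_extract w hbc hcn, List.extract_append_extract w hab hbn,
      List.extract_append_extract w (Nat.zero_le _) (Nat.le_trans hab hbn)]
    simp
  set X := w.extract 0 a
  set Y := w.extract a b
  set Z := w.extract b c
  set U := w.extract c w.length
  have ⟨_, hstart, haccept, _⟩ := hs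
  -- Since `s a = s b = s c`, the two loops can be swapped: `X ++ Z ++ Y ++ U` is accepted too.
  have hX : s a ∈ M.evalFrom M.start X := hs.mem_evalFrom_extract hstart a (Fin.zero_le a)
  have hZ : s c ∈ M.evalFrom (M.evalFrom M.start X) Z :=
    hs.mem_evalFrom_extract (hsab ▸ hX) c hbc
  have hY : s b ∈ M.evalFrom (M.evalFrom (M.evalFrom M.start X) Z) Y :=
    hs.mem_evalFrom_extract (i := a) (by rwa [hsab, hsbc]) b hab
  have hU : s (Fin.last _) ∈ M.evalFrom (M.evalFrom (M.evalFrom (M.evalFrom M.start X) Z) Y) U :=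
    hs.mem_evalFrom_extract (i := c) (by rwa [← hsbc]) _ (Fin.le_last c)
  obtain ⟨s', hs'⟩ :=
    exists_isAccPath_of_mem_accepts (n := w.length) (v := X ++ (Z ++ (Y ++ U)))
      (NFA.mem_accepts.mpr ⟨_, haccept, by simpa only [NFA.evalFrom_append] using hU⟩)
      (by rw [← hw]; simp only [List.length_append]; omega)
  have h := List.append_cancel_left ((hacc.2.1 _ s' hs').trans hw.symm)
  rw [← List.append_assoc, ← List.append_assoc] at h
  exact (List.append_cancel_right h).symm

theorem UniquelyAccepts.listPow_prefix_extract {w : List α} (hacc : UniquelyAccepts M w)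
    {s : Fin (w.length + 1) → σ} (hs : IsAccPath M w.length w s) {a b c d : Fin (w.length + 1)}
    (hab : a ≤ b) (hbc : b ≤ c) (hcd : c ≤ d) (hsab : s a = s b) (hsbc : s b = s c)
    (hscd : s c = s d) {j : ℕ} (hj : j * ((c : ℕ) - b) ≤ (d : ℕ) - a) :
    listPow (w.extract b c) j <+: w.extract a d := by
  set Y := w.extract a b
  set Z := w.extract b c
  set W := w.extract c d
  have hYZ : Y ++ Z = Z ++ Y := hacc.extract_append_comm hs hab hbc hsab hsbc
  have hZW : Z ++ W = W ++ Z := hacc.extract_append_comm hs hbc hcd hsbc hscd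
  have hT : w.extract a d = Y ++ Z ++ W := by
    rw [List.extract_append_extract w hab hbc, List.extract_append_extract w (hab.trans hbc) hcd]
  refine listPow_prefix_of_append_comm ?_ ?_
  · rw [hT]
    calc Y ++ Z ++ W ++ Z = (Y ++ Z) ++ (Z ++ W) := by rw [List.append_assoc, ← hZW]
      _ = Z ++ (Y ++ Z ++ W) := by simp only [← List.append_assoc]; rw [hYZ]
  · rwa [List.length_extract_of_le w d.is_le, List.length_extract_of_le w c.is_le]

end Runs

theorem stmt_16 {α σ : Type*} [DecidableEq σ] (M : NFA α σ) (w : List α) (k : ℕ) (hk : 2 ≤ k)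
    (hacc : UniquelyAccepts M w)
    (s : Fin (w.length + 1) → σ) (hs : IsAccPath M w.length w s)
    (p : σ) (hvisit : k + 1 ≤ (Finset.univ.filter (fun i : Fin (w.length + 1) => s i = p)).card) :
    ∃ c : List α, c ≠ [] ∧ listPow c k <:+: w := by
  obtain ⟨F, hFsub, hFcard⟩ := Finset.exists_subset_card_eq hvisit
  set e := F.orderEmbOfFin hFcard
  have he : ∀ j, s (e j) = p := fun j =>
    (Finset.mem_filter.mp (hFsub (F.orderEmbOfFin_mem hFcard j))).2
  obtain ⟨m, hm⟩ := Fin.exists_mul_succ_sub_castSucc_le (by omega) (fun j => (e j : ℕ))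
    (Fin.val_strictMono.monotone.comp e.monotone)
  have hgap : (e m.castSucc : ℕ) < e m.succ := e.strictMono Fin.castSucc_lt_succ
  refine ⟨w.extract (e m.castSucc) (e m.succ), ?_, ?_⟩
  · rw [← List.length_pos_iff, List.length_extract_of_le w (e _).is_le]
    omega
  · exact (hacc.listPow_prefix_extract hs (e.monotone (Fin.zero_le _))
      (e.monotone (Fin.castSucc_le_succ m)) (e.monotone (Fin.le_last _)) ((he _).trans (he _).symm)
      ((he _).trans (he _).symm) ((he _).trans (he _).symm) hm).isInfix.trans
      (List.extract_infix w _ _)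
end

section
/- For every word x of length n over a finite alphabet, there exists an NFA with at most ⌊n/2⌋ + 1 states that accepts x and has exactly one accepting path of length n (so accepts no other word of length n). -/
/-!
Let `n = |x|`. For odd `n = 2k + 1`, read `x` along the walk `0, 1, …, k, k, k - 1, …, 0` on
the states `0, …, k`, one transition per letter. In the graph of these transitions a walk can
change its state by at most one per step and can stay put only at the top state `k`; since
`n` is odd, a closed walk of length `n` from `0` must stay put somewhere, and it can reach `k`
and come back only along the spine itself. Consecutive pairs of spine states are pairwise
distinct, so the transitions of the spine carry its letters unambiguously. For even `n ≥ 2`,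
append to the spine for the first `n - 1` letters one step into a fresh final state.
-/

open Set

section SpineNFA

variable {α : Type*}

def SpineStep (f : ℕ → ℕ) (n a b : ℕ) : Prop := ∃ u < n, a = f u ∧ b = f (u + 1)

def IsRigidSpine (f : ℕ → ℕ) (n : ℕ) : Prop :=
  ∀ p : ℕ → ℕ, p 0 = f 0 → p n = f n → (∀ t < n, SpineStep f n (p t) (p (t + 1))) →
    ∀ t ≤ n, p t = f t

def spineNFA (x : List α) (m : ℕ) (f : ℕ → ℕ) : NFA α (Fin m) where
  step p a := {q | ∃ u, ∃ hu : u < x.length, (p : ℕ) = f u ∧ (q : ℕ) = f (u + 1) ∧ x[u] = a}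
  start := {q | (q : ℕ) = f 0}
  accept := {q | (q : ℕ) = f x.length}

theorem IsAccPath.eq_spine {x v : List α} {m : ℕ} {f : ℕ → ℕ}
    {s : Fin (x.length + 1) → Fin m} (hrigid : IsRigidSpine f x.length)
    (hinj : InjOn (fun u => (f u, f (u + 1))) (Iio x.length))
    (hs : IsAccPath (spineNFA x m f) x.length v s) :
    (∀ i, (s i : ℕ) = f i) ∧ v = x := by
  obtain ⟨hv, hstart, haccept, hstep⟩ := hs
  let p : ℕ → ℕ := fun t => if h : t < x.length + 1 then s ⟨t, h⟩ else 0
  have hp : ∀ i : Fin (x.length + 1), p i = s i := fun i => dif_pos i.isLt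
  have hwalk : ∀ t ≤ x.length, p t = f t := by
    refine hrigid p ((hp 0).trans hstart) ((hp (Fin.last x.length)).trans haccept) fun t ht => ?_
    obtain ⟨u, hu, hsu, hsu', -⟩ := hstep ⟨t, ht⟩
    exact ⟨u, hu, (hp _).trans hsu, (hp _).trans hsu'⟩
  refine ⟨fun i => (hp i).symm.trans (hwalk i i.is_le), List.ext_get (by omega) fun i hi _ => ?_⟩
  obtain ⟨u, hu, hsu, hsu', hxu⟩ := hstep ⟨i, by omega⟩
  have hui : u = i := hinj hu (show i < x.length by omega) <| Prod.ext
    (hsu.symm.trans ((hp _).symm.trans (hwalk i (by omega))))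
    (hsu'.symm.trans ((hp _).symm.trans (hwalk (i + 1) (by omega))))
  subst hui
  exact hxu.symm

theorem uniquelyAccepts_spineNFA {x : List α} {m n : ℕ} {f : ℕ → ℕ} (hn : x.length = n)
    (hf : ∀ t ≤ n, f t < m) (hrigid : IsRigidSpine f n)
    (hinj : InjOn (fun u => (f u, f (u + 1))) (Iio n)) :
    UniquelyAccepts (spineNFA x m f) x := by
  subst hn
  refine ⟨⟨fun i => ⟨f i, hf i i.is_le⟩, rfl, rfl, rfl, fun i => ⟨i, i.isLt, rfl, rfl, rfl⟩⟩,
    fun v s hs => (hs.eq_spine hrigid hinj).2, fun s s' hs hs' => funext fun i => Fin.ext ?_⟩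
  rw [(hs.eq_spine hrigid hinj).1, (hs'.eq_spine hrigid hinj).1]

end SpineNFA

theorem le_add_sub_of_unit_steps {p : ℕ → ℕ} {n s t : ℕ}
    (hp : ∀ t < n, p (t + 1) ≤ p t + 1 ∧ p t ≤ p (t + 1) + 1) (hst : s ≤ t) (htn : t ≤ n) :
    p t ≤ p s + (t - s) ∧ p s ≤ p t + (t - s) := by
  induction t, hst using Nat.le_induction with
  | base => simp
  | succ t hst ih =>
    have := ih (by omega)
    have := hp t (by omega)
    omega

theorem exists_succ_eq_of_odd {p : ℕ → ℕ} {n : ℕ}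
    (hp : ∀ t < n, p (t + 1) ≤ p t + 1 ∧ p t ≤ p (t + 1) + 1) (hn : Odd n) (hpn : p n = p 0) :
    ∃ t < n, p (t + 1) = p t := by
  by_contra! hne
  have parity : ∀ t ≤ n, (p t + t) % 2 = p 0 % 2 := by
    intro t ht
    induction t with
    | zero => simp
    | succ t ih =>
      have := ih (by omega)
      have := hp t (by omega)
      have := hne t (by omega)
      omega
  have := parity n le_rfl
  obtain ⟨j, rfl⟩ := hn
  omega

/-- The walk `0, 1, …, k, k, k - 1, …, 0` of length `2 * k + 1`. -/
def oddSpine (k t : ℕ) : ℕ := min t (2 * k + 1 - t)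

theorem spineStep_oddSpine {k a b : ℕ} (h : SpineStep (oddSpine k) (2 * k + 1) a b) :
    (b ≤ a + 1 ∧ a ≤ b + 1) ∧ (b = a → a = k) := by
  obtain ⟨u, hu, rfl, rfl⟩ := h
  simp only [oddSpine]
  omega

theorem isRigidSpine_oddSpine (k : ℕ) : IsRigidSpine (oddSpine k) (2 * k + 1) := by
  intro p h0 hn hstep
  simp only [oddSpine] at h0 hn
  have hunit := fun t ht => (spineStep_oddSpine (hstep t ht)).1
  have hdist := fun s t hst htn => le_add_sub_of_unit_steps (s := s) (t := t) hunit hst htn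
  obtain ⟨τ, hτ, hstay⟩ := exists_succ_eq_of_odd hunit (odd_two_mul_add_one k) (by omega)
  have hpτ : p τ = k := (spineStep_oddSpine (hstep τ hτ)).2 hstay
  have hτk : τ = k := by
    have := hdist 0 τ (by omega) (by omega)
    have := hdist (τ + 1) (2 * k + 1) (by omega) le_rfl
    omega
  subst hτk
  intro t ht
  simp only [oddSpine]
  rcases le_or_gt t τ with htτ | hτt
  · have := hdist 0 t (by omega) (by omega)
    have := hdist t τ htτ (by omega)
    omega
  · have := hdist (τ + 1) t (by omega) ht
    have := hdist t (2 * τ + 1) ht le_rfl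
    omega

theorem injOn_pairs_oddSpine (k : ℕ) :
    InjOn (fun u => (oddSpine k u, oddSpine k (u + 1))) (Iio (2 * k + 1)) := by
  intro u hu v hv h
  simp only [oddSpine, Prod.mk.injEq, mem_Iio] at hu hv h
  omega

theorem IsRigidSpine.update {f : ℕ → ℕ} {n c : ℕ} (hf : IsRigidSpine f n)
    (hc : ∀ t ≤ n, f t ≠ c) : IsRigidSpine (Function.update f (n + 1) c) (n + 1) := by
  set g := Function.update f (n + 1) c
  have hg : ∀ t ≤ n, g t = f t := fun t ht => Function.update_of_ne (by omega) c f
  have hgc : g (n + 1) = c := Function.update_self (n + 1) c f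
  intro p h0 hn hstep
  rw [hgc] at hn
  have hpc : ∀ t < n, p (t + 1) ≠ c := by
    intro t ht hpt
    obtain ⟨u, hu, hpu, -⟩ := hstep (t + 1) (by omega)
    exact hc u (by omega) ((hg u (by omega)).symm.trans (hpu.symm.trans hpt))
  have hpn : p n = f n := by
    obtain ⟨u, hu, hpu, hpu'⟩ := hstep n (by omega)
    obtain rfl : u = n := by
      by_contra hun
      exact hc (u + 1) (by omega) ((hg (u + 1) (by omega)).symm.trans (hpu'.symm.trans hn))
    rw [hpu, hg u le_rfl]
  have hwalk := hf p (h0.trans (hg 0 (by omega))) hpn fun t ht => by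
    obtain ⟨u, hu, hpu, hpu'⟩ := hstep t (by omega)
    have hun : u < n := by
      by_contra hun
      exact hpc t ht (hpu'.trans (by rw [show u + 1 = n + 1 by omega, hgc]))
    exact ⟨u, hun, hpu.trans (hg u (by omega)), hpu'.trans (hg (u + 1) (by omega))⟩
  intro t ht
  rcases Nat.lt_or_eq_of_le ht with ht | rfl
  · rw [hwalk t (by omega), hg t (by omega)]
  · rw [hn, hgc]

theorem injOn_pairs_update {f : ℕ → ℕ} {n c : ℕ}
    (hinj : InjOn (fun u => (f u, f (u + 1))) (Iio n)) (hc : ∀ t ≤ n, f t ≠ c) :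
    InjOn (fun u => (Function.update f (n + 1) c u, Function.update f (n + 1) c (u + 1)))
      (Iio (n + 1)) := by
  set g := Function.update f (n + 1) c
  have hg : ∀ t ≤ n, g t = f t := fun t ht => Function.update_of_ne (by omega) c f
  have hgc : g (n + 1) = c := Function.update_self (n + 1) c f
  have hlast : ∀ u < n + 1, g (u + 1) = c → u = n := fun u hu h => by
    by_contra hun
    exact hc (u + 1) (by omega) ((hg (u + 1) (by omega)).symm.trans h)
  intro u hu v hv h
  simp only [mem_Iio, Prod.mk.injEq] at hu hv h
  rcases Nat.lt_or_eq_of_le (Nat.le_of_lt_succ hu) with hu' | rfl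
  · rcases Nat.lt_or_eq_of_le (Nat.le_of_lt_succ hv) with hv' | rfl
    · refine hinj hu' hv' (Prod.ext ?_ ?_)
      · simpa only [hg u hu'.le, hg v hv'.le] using h.1
      · simpa only [hg (u + 1) hu', hg (v + 1) hv'] using h.2
    · exact hlast u hu (h.2.trans hgc)
  · exact (hlast v hv (h.2.symm.trans hgc)).symm

theorem stmt_17 {α : Type*} (x : List α) :
    ∃ (m : ℕ), m ≤ x.length / 2 + 1 ∧ ∃ M : NFA α (Fin m), UniquelyAccepts M x := by
  obtain ⟨k, hk | hk⟩ := Nat.even_or_odd' x.length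
  · cases k with
    | zero =>
      refine ⟨1, by omega, _, uniquelyAccepts_spineNFA (f := fun _ => 0) hk (by simp) ?_ ?_⟩
      · intro p h0 _ _ t ht
        rwa [Nat.le_zero.1 ht]
      · simp
    | succ k =>
      have hfresh : ∀ t ≤ 2 * k + 1, oddSpine k t ≠ k + 1 := by
        intro t _
        simp only [oddSpine]
        omega
      refine ⟨k + 2, by omega, _, uniquelyAccepts_spineNFA (n := 2 * k + 1 + 1) (by omega) ?_
        ((isRigidSpine_oddSpine k).update hfresh)
        (injOn_pairs_update (injOn_pairs_oddSpine k) hfresh)⟩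
      intro t ht
      rcases Nat.lt_or_eq_of_le ht with ht | rfl
      · rw [Function.update_of_ne (by omega)]
        simp only [oddSpine]
        omega
      · simp
  · refine ⟨k + 1, by omega, _, uniquelyAccepts_spineNFA hk ?_ (isRigidSpine_oddSpine k)
      (injOn_pairs_oddSpine k)⟩
    intro t _
    simp only [oddSpine]
    omega
end
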